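/- Sorting via heaps is correct: for every list l, H2list (foldr istH Empty l) equals insertion sort of l. -/

import Mathlib

variable {α : Type*}

def merge [LinearOrder α] : List α → List α → List α
  | [], l => l
  | l, [] => l
  | h1 :: t1, h2 :: t2 =>
    if h1 ≤ h2 then h1 :: merge t1 (h2 :: t2) else h2 :: merge (h1 :: t1) t2
termination_by l1 l2 => l1.length + l2.length

def insrt [LinearOrder α] (x : α) : List α → List α
  | [] => [x]
  | h :: t => if x ≤ h then x :: h :: t else h :: insrt x t

inductive BTree (α : Type*) where
  | Empty : BTree α
  | Node : α → BTree α → BTree α → BTree α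

inductive AllT (p : α → Prop) : BTree α → Prop
  | empty : AllT p BTree.Empty
  | node : ∀ {x l r}, p x → AllT p l → AllT p r → AllT p (BTree.Node x l r)

inductive BST [LinearOrder α] : BTree α → Prop
  | empty : BST BTree.Empty
  | node : ∀ {x : α} {l r}, AllT (· < x) l → AllT (x ≤ ·) r → BST l → BST r →
      BST (BTree.Node x l r)

inductive HEAP [LinearOrder α] : BTree α → Prop
  | empty : HEAP BTree.Empty
  | node : ∀ {x : α} {l r}, AllT (x ≤ ·) l → AllT (x ≤ ·) r → HEAP l → HEAP r →
      HEAP (BTree.Node x l r)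

def istBST [LinearOrder α] (x : α) : BTree α → BTree α
  | BTree.Empty => BTree.Node x BTree.Empty BTree.Empty
  | BTree.Node y l r => if x < y then BTree.Node y (istBST x l) r else BTree.Node y l (istBST x r)

def istH [LinearOrder α] (x : α) : BTree α → BTree α
  | BTree.Empty => BTree.Node x BTree.Empty BTree.Empty
  | BTree.Node y l r => if x < y then BTree.Node x (istH y r) l else BTree.Node y (istH x r) l

def BST2list : BTree α → List α
  | BTree.Empty => []
  | BTree.Node x l r => BST2list l ++ x :: BST2list r

def H2list [LinearOrder α] : BTree α → List α
  | BTree.Empty => []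
  | BTree.Node x l r => x :: merge (H2list l) (H2list r)

def BT2list [LinearOrder α] : BTree α → List α
  | BTree.Empty => []
  | BTree.Node x l r => merge [x] (merge (BT2list l) (BT2list r))

def buildBST [LinearOrder α] (l : List α) : BTree α :=
  l.foldl (fun t x => istBST x t) BTree.Empty

def isort [LinearOrder α] (l : List α) : List α :=
  l.foldr insrt []

/-!
Inserting into a heap with `istH` keeps it a heap and adds the new element to the multiset of its
entries, so `l.foldr istH BTree.Empty` is a heap holding exactly the elements of `l`. Reading a heap
with `H2list` gives a sorted list, since the root is below everything and `merge` preserves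
sortedness. Both sides are therefore sorted permutations of `l`, hence equal.
-/

theorem merge_eq_listMerge [LinearOrder α] (l₁ l₂ : List α) :
    merge l₁ l₂ = l₁.merge l₂ (· ≤ ·) := by
  fun_induction merge l₁ l₂ <;> simp_all

theorem coe_merge [LinearOrder α] (l₁ l₂ : List α) :
    (merge l₁ l₂ : Multiset α) = l₁ + l₂ := by
  rw [merge_eq_listMerge, Multiset.coe_add, Multiset.coe_eq_coe]
  exact List.merge_perm_append _

theorem mem_merge [LinearOrder α] {a : α} {l₁ l₂ : List α} :
    a ∈ merge l₁ l₂ ↔ a ∈ l₁ ∨ a ∈ l₂ := by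
  rw [merge_eq_listMerge, List.mem_merge]

theorem pairwise_merge [LinearOrder α] {l₁ l₂ : List α} (h₁ : l₁.Pairwise (· ≤ ·))
    (h₂ : l₂.Pairwise (· ≤ ·)) : (merge l₁ l₂).Pairwise (· ≤ ·) := by
  rw [merge_eq_listMerge]
  exact h₁.merge h₂

theorem insrt_eq_orderedInsert [LinearOrder α] (x : α) (l : List α) :
    insrt x l = l.orderedInsert (· ≤ ·) x := by
  induction l with
  | nil => rfl
  | cons h t ih => simp [insrt, ih]

theorem isort_eq_insertionSort [LinearOrder α] (l : List α) :
    isort l = l.insertionSort (· ≤ ·) := by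
  induction l with
  | nil => rfl
  | cons x t ih => simp_all [isort, insrt_eq_orderedInsert]

theorem AllT.imp {p q : α → Prop} (h : ∀ a, p a → q a) {t : BTree α} (ht : AllT p t) :
    AllT q t := by
  induction ht with
  | empty => exact .empty
  | node hx _ _ ihl ihr => exact .node (h _ hx) ihl ihr

theorem AllT.forall_mem_H2list [LinearOrder α] {p : α → Prop} {t : BTree α} (ht : AllT p t) :
    ∀ a ∈ H2list t, p a := by
  induction ht with
  | empty => simp [H2list]
  | node hx _ _ ihl ihr =>
    simp only [H2list, List.mem_cons, mem_merge]
    rintro a (rfl | ha | ha)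
    exacts [hx, ihl a ha, ihr a ha]

theorem allT_istH [LinearOrder α] {p : α → Prop} {x : α} (hx : p x) {t : BTree α}
    (ht : AllT p t) : AllT p (istH x t) := by
  induction ht generalizing x with
  | empty => exact .node hx .empty .empty
  | @node y l r hy hl _ _ ihr =>
    unfold istH
    split
    · exact .node hx (ihr hy) hl
    · exact .node hy (ihr hx) hl

theorem heap_istH [LinearOrder α] (x : α) {t : BTree α} (ht : HEAP t) : HEAP (istH x t) := by
  induction ht generalizing x with
  | empty => exact .node .empty .empty .empty .empty
  | @node y l r hl hr Hl _ _ ihr =>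
    unfold istH
    split
    case isTrue hxy =>
      have below : ∀ a, y ≤ a → x ≤ a := fun _ => hxy.le.trans
      exact .node (allT_istH hxy.le (hr.imp below)) (hl.imp below) (ihr y) Hl
    case isFalse hxy => exact .node (allT_istH (not_lt.1 hxy) hr) hl (ihr x) Hl

theorem pairwise_H2list_of_heap [LinearOrder α] {t : BTree α} (ht : HEAP t) :
    (H2list t).Pairwise (· ≤ ·) := by
  induction ht with
  | empty => exact .nil
  | node hl hr _ _ ihl ihr =>
    refine List.Pairwise.cons (fun a ha => ?_) (pairwise_merge ihl ihr)
    rcases mem_merge.1 ha with ha | ha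
    exacts [hl.forall_mem_H2list a ha, hr.forall_mem_H2list a ha]

theorem coe_H2list_istH [LinearOrder α] (x : α) (t : BTree α) :
    (H2list (istH x t) : Multiset α) = x ::ₘ H2list t := by
  induction t generalizing x with
  | Empty => simp [istH, H2list, merge]
  | Node y l r _ ihr =>
    unfold istH
    split <;> simp only [H2list, ← Multiset.cons_coe, coe_merge, ihr, Multiset.cons_add,
      Multiset.cons_swap x y, add_comm (H2list l : Multiset α)]

theorem heap_foldr_istH [LinearOrder α] (l : List α) : HEAP (l.foldr istH BTree.Empty) := by
  induction l with
  | nil => exact .empty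
  | cons x t ih => exact heap_istH x ih

theorem H2list_foldr_istH_perm [LinearOrder α] (l : List α) :
    (H2list (l.foldr istH BTree.Empty)).Perm l := by
  rw [← Multiset.coe_eq_coe]
  induction l with
  | nil => rfl
  | cons x t ih => rw [List.foldr_cons, coe_H2list_istH, ih, Multiset.cons_coe]

theorem isortH_correct [LinearOrder α] (l : List α) :
    H2list (l.foldr istH BTree.Empty) = isort l := by
  rw [isort_eq_insertionSort]
  exact ((H2list_foldr_istH_perm l).trans (List.perm_insertionSort _ l).symm).eq_of_pairwise'
    (pairwise_H2list_of_heap (heap_foldr_istH l)) (List.pairwise_insertionSort _ l)
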